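/- Under the same hypotheses (N = e^F ∈ Σ_+^{(1)}), the deformed beta numbers b_{m,n} := ∫_0^1 q_m(η) q_n(1−η) dη satisfy b_{m,n} ≥ x_m! x_n!/(m+n+1)! for all m, n. -/

import Mathlib

/-!
Since `F` has no constant term, `log (exp F) = F`: substitute `F` into the formal identity
`log (1 + (exp X - 1)) = X`, which holds because both sides vanish at `0` and have derivative `1`.
Hence `N^η = exp (η F)` and `q_n(η) = x_n! ∑_k η^k/k! [t^n] F^k`, a polynomial in `η` with
nonnegative coefficients whose top term is `x_n! η^n / n!` because `a_1 = 1`. Keeping only the top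
terms bounds the integrand of `b_{m,n}` below by `x_m! x_n! η^m (1-η)^n / (m! n!)`, and the Beta
integral `∫₀¹ η^m (1-η)^n dη = m! n! / (m+n+1)!` gives the claim.
-/

open PowerSeries Finset

/-- Formal exponential of a power series (intended for series with zero constant term):
coefficientwise `exp F = ∑_k F^k / k!`, which is a finite sum in each coefficient. -/
noncomputable def expS (F : PowerSeries ℝ) : PowerSeries ℝ :=
  PowerSeries.mk fun n => ∑ k ∈ Finset.range (n + 1),
    (1 / (k.factorial : ℝ)) * PowerSeries.coeff n (F ^ k)

/-- Formal logarithm of a power series (intended for series with constant term 1):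
coefficientwise `log N = ∑_{k≥1} (-1)^{k+1} (N-1)^k / k`. -/
noncomputable def logS (N : PowerSeries ℝ) : PowerSeries ℝ :=
  PowerSeries.mk fun n => ∑ k ∈ Finset.range (n + 1),
    ((-1 : ℝ) ^ (k + 1) / (k : ℝ)) * PowerSeries.coeff n ((N - 1) ^ k)

/-- The formal power `N^η := exp (η · log N)`. -/
noncomputable def powS (N : PowerSeries ℝ) (η : ℝ) : PowerSeries ℝ :=
  expS (η • logS N)

/-- Deformed factorial `x_n! = x_1 x_2 ⋯ x_n`, with `x_0! = 1`. -/
noncomputable def xfac (x : ℕ → ℝ) (n : ℕ) : ℝ := ∏ k ∈ Finset.Icc 1 n, x k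

open MeasureTheory

namespace PowerSeries

section CommSemiring

variable {R : Type*} [CommSemiring R]

theorem coeff_pow_eq_zero_of_lt {G : R⟦X⟧} (hG : constantCoeff G = 0) {n k : ℕ} (h : n < k) :
    coeff n (G ^ k) = 0 :=
  coeff_of_lt_order _ ((Nat.cast_lt.2 h).trans_le (le_order_pow_of_constantCoeff_eq_zero k hG))

theorem coeff_pow_self_eq_pow_coeff_one {G : R⟦X⟧} (hG : constantCoeff G = 0) (n : ℕ) :
    coeff n (G ^ n) = coeff 1 G ^ n := by
  obtain ⟨H, rfl⟩ := X_dvd_iff.2 hG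
  rw [mul_pow, coeff_X_pow_mul', if_pos le_rfl, Nat.sub_self, coeff_zero_eq_constantCoeff,
    map_pow, coeff_succ_X_mul, coeff_zero_eq_constantCoeff]

theorem coeff_pow_nonneg [PartialOrder R] [IsOrderedRing R] {G : R⟦X⟧}
    (hG : ∀ i, 0 ≤ coeff i G) (k i : ℕ) : 0 ≤ coeff i (G ^ k) := by
  induction k generalizing i with
  | zero => rw [pow_zero, coeff_one]; split_ifs <;> simp
  | succ k ih =>
    rw [pow_succ, coeff_mul]
    exact sum_nonneg fun p _ => mul_nonneg (ih p.1) (hG p.2)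

end CommSemiring

theorem coeff_subst_eq_sum_range {R S : Type*} [CommRing R] [CommRing S] [Algebra R S]
    {G : S⟦X⟧} (hG : constantCoeff G = 0) (f : R⟦X⟧) (n : ℕ) :
    coeff n (f.subst G) = ∑ k ∈ range (n + 1), coeff k f • coeff n (G ^ k) := by
  rw [coeff_subst' (HasSubst.of_constantCoeff_zero' hG)]
  refine finsum_eq_sum_of_support_subset _ fun k hk => ?_
  rw [coe_range, Set.mem_Iio, Nat.lt_succ_iff]
  by_contra! h
  exact hk (by simp only [coeff_pow_eq_zero_of_lt hG h, smul_zero])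

theorem log_subst_exp_sub_one {A : Type*} [CommRing A] [Algebra ℚ A] [IsAddTorsionFree A] :
    (log A).subst (exp A - 1) = X := by
  have hE : HasSubst (exp A - 1) := HasSubst.exp_sub_one
  have hgeom : d⁄dX A (log A) * (1 + X) = 1 := by
    ext (_ | n)
    · simp [deriv_log]
    · simp [deriv_log, mul_add, coeff_succ_mul_X, pow_succ]
  refine derivative.ext ?_ ?_
  · rw [derivative_subst hE, map_sub, derivative_exp, derivative_one, sub_zero, derivative_X]
    have := congrArg (subst (exp A - 1)) hgeom
    rw [subst_mul hE, subst_add hE, subst_X hE, ← map_one (C (R := A)), subst_C] at this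
    simpa using this
  · rw [constantCoeff_X]
    refine constantCoeff_subst_eq_zero ?_ _ constantCoeff_log
    rw [map_sub, map_one, ← constantCoeff_eq, constantCoeff_exp, sub_self]

end PowerSeries

open PowerSeries
open scoped Nat

theorem expS_eq_subst {F : ℝ⟦X⟧} (hF : constantCoeff F = 0) : expS F = (exp ℝ).subst F := by
  ext n
  rw [expS, coeff_mk, coeff_subst_eq_sum_range hF]
  refine sum_congr rfl fun k _ => ?_
  simp [coeff_exp]

theorem logS_eq_subst {N : ℝ⟦X⟧} (hN : constantCoeff N = 1) :
    logS N = (log ℝ).subst (N - 1) := by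
  ext n
  rw [logS, coeff_mk, coeff_subst_eq_sum_range (by rw [map_sub, hN, map_one, sub_self])]
  refine sum_congr rfl fun k _ => ?_
  rcases eq_or_ne k 0 with rfl | hk
  · simp -- the `k = 0` term of `logS` is `(-1) / 0 = 0`
  · simp [coeff_log, hk]

theorem constantCoeff_expS (F : ℝ⟦X⟧) : constantCoeff (expS F) = 1 := by
  rw [← coeff_zero_eq_constantCoeff_apply, expS, coeff_mk]
  simp

theorem logS_expS {F : ℝ⟦X⟧} (hF : constantCoeff F = 0) : logS (expS F) = F := by
  have hF' : HasSubst F := HasSubst.of_constantCoeff_zero' hF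
  have hsub : (exp ℝ).subst F - 1 = (exp ℝ - 1).subst F := by
    rw [← coe_substAlgHom hF', map_sub, map_one]
  rw [logS_eq_subst (constantCoeff_expS F), expS_eq_subst hF, hsub,
    ← subst_comp_subst_apply HasSubst.exp_sub_one hF', log_subst_exp_sub_one, subst_X hF']

theorem powS_expS {F : ℝ⟦X⟧} (hF : constantCoeff F = 0) (η : ℝ) :
    powS (expS F) η = expS (η • F) := by
  rw [powS, logS_expS hF]

theorem coeff_expS_smul (F : ℝ⟦X⟧) (η : ℝ) (n : ℕ) :
    coeff n (expS (η • F)) =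
      ∑ k ∈ range (n + 1), 1 / (k ! : ℝ) * (η ^ k * coeff n (F ^ k)) := by
  simp only [expS, coeff_mk, smul_pow, coeff_smul, smul_eq_mul]

theorem continuous_coeff_expS_smul (F : ℝ⟦X⟧) (n : ℕ) :
    Continuous fun η : ℝ => coeff n (expS (η • F)) := by
  simp only [coeff_expS_smul]
  fun_prop

theorem coeff_one_pow_div_factorial_le_coeff_expS {G : ℝ⟦X⟧} (hG0 : constantCoeff G = 0)
    (hG : ∀ i, 0 ≤ coeff i G) (n : ℕ) : coeff 1 G ^ n / n ! ≤ coeff n (expS G) := by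
  rw [expS, coeff_mk]
  calc coeff 1 G ^ n / n ! = 1 / (n ! : ℝ) * coeff n (G ^ n) := by
        rw [coeff_pow_self_eq_pow_coeff_one hG0]; ring
    _ ≤ _ := single_le_sum (f := fun k => 1 / (k ! : ℝ) * coeff n (G ^ k))
        (fun k _ => mul_nonneg (by positivity) (coeff_pow_nonneg hG k n)) (self_mem_range_succ n)

theorem integral_pow_mul_one_sub_pow_succ (m n : ℕ) :
    (m + 1) * ∫ x in (0 : ℝ)..1, x ^ m * (1 - x) ^ (n + 1)
      = (n + 1) * ∫ x in (0 : ℝ)..1, x ^ (m + 1) * (1 - x) ^ n := by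
  have hderiv : ∀ x ∈ Set.uIcc (0 : ℝ) 1,
      HasDerivAt (fun y => y ^ (m + 1) * (1 - y) ^ (n + 1))
      ((m + 1) * (x ^ m * (1 - x) ^ (n + 1)) - (n + 1) * (x ^ (m + 1) * (1 - x) ^ n)) x := by
    intro x _
    refine ((hasDerivAt_pow (m + 1) x).fun_mul
      (((hasDerivAt_id' x).const_sub 1).fun_pow (n + 1))).congr_deriv ?_
    push_cast
    ring
  have hint : ∀ i j : ℕ, IntervalIntegrable (fun x : ℝ => x ^ i * (1 - x) ^ j) volume 0 1 :=
    fun i j => (by fun_prop : Continuous fun x : ℝ => x ^ i * (1 - x) ^ j).intervalIntegrable 0 1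
  have hzero : ∫ x in (0 : ℝ)..1,
      ((m + 1) * (x ^ m * (1 - x) ^ (n + 1)) - (n + 1) * (x ^ (m + 1) * (1 - x) ^ n)) = 0 := by
    rw [intervalIntegral.integral_eq_sub_of_hasDerivAt hderiv
      (((hint m (n + 1)).const_mul _).sub ((hint (m + 1) n).const_mul _))]
    simp
  rwa [intervalIntegral.integral_sub ((hint m (n + 1)).const_mul _)
    ((hint (m + 1) n).const_mul _), intervalIntegral.integral_const_mul,
    intervalIntegral.integral_const_mul, sub_eq_zero] at hzero

theorem integral_pow_mul_one_sub_pow (m n : ℕ) :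
    ∫ x in (0 : ℝ)..1, x ^ m * (1 - x) ^ n = m ! * n ! / (m + n + 1)! := by
  induction n generalizing m with
  | zero => simp [Nat.factorial_succ, field]
  | succ n ih =>
    have h := integral_pow_mul_one_sub_pow_succ m n
    rw [ih (m + 1), show m + 1 + n + 1 = m + (n + 1) + 1 by omega] at h
    refine mul_left_cancel₀ (Nat.cast_add_one_ne_zero m) (h.trans ?_)
    rw [Nat.factorial_succ m, Nat.factorial_succ n]
    push_cast
    ring

theorem pow_div_factorial_le_coeff_expS_smul {F : ℝ⟦X⟧} (hF0 : constantCoeff F = 0)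
    (hF : ∀ i, 0 ≤ coeff i F) (hF1 : coeff 1 F = 1) (n : ℕ) {η : ℝ} (hη : 0 ≤ η) :
    η ^ n / n ! ≤ coeff n (expS (η • F)) := by
  simpa [hF1] using coeff_one_pow_div_factorial_le_coeff_expS (G := η • F) (by simp [hF0])
    (fun i => by simpa using mul_nonneg hη (hF i)) n

theorem mul_div_factorial_le_integral_mul_comp_one_sub {f g : ℝ → ℝ} (hf : Continuous f)
    (hg : Continuous g) {c d : ℝ} (hc : 0 ≤ c) (hd : 0 ≤ d) {m n : ℕ}
    (hfle : ∀ η ∈ Set.Icc (0 : ℝ) 1, c * (η ^ m / m !) ≤ f η)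
    (hgle : ∀ η ∈ Set.Icc (0 : ℝ) 1, d * (η ^ n / n !) ≤ g η) :
    c * d / (m + n + 1)! ≤ ∫ η in Set.Icc (0 : ℝ) 1, f η * g (1 - η) := by
  have hbeta : ∫ η in Set.Icc (0 : ℝ) 1, c * (η ^ m / m !) * (d * ((1 - η) ^ n / n !))
      = c * d / (m + n + 1)! := by
    have h : ∀ η : ℝ, c * (η ^ m / m !) * (d * ((1 - η) ^ n / n !))
        = c * d / (m ! * n !) * (η ^ m * (1 - η) ^ n) := fun η => by ring
    rw [integral_Icc_eq_integral_Ioc, ← intervalIntegral.integral_of_le zero_le_one]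
    simp_rw [h]
    rw [intervalIntegral.integral_const_mul, integral_pow_mul_one_sub_pow]
    field_simp
  rw [← hbeta]
  have hcont : Continuous fun η : ℝ => c * (η ^ m / m !) * (d * ((1 - η) ^ n / n !)) := by
    fun_prop
  refine setIntegral_mono_on hcont.integrableOn_Icc
    (hf.mul (hg.comp (continuous_const.sub continuous_id))).integrableOn_Icc measurableSet_Icc
    fun η ⟨h0, h1⟩ => ?_
  have h1' : 1 - η ∈ Set.Icc (0 : ℝ) 1 := ⟨by linarith, by linarith⟩
  exact mul_le_mul (hfle η ⟨h0, h1⟩) (hgle (1 - η) h1') (by have := h1'.1; positivity)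
    ((mul_nonneg hc (by positivity)).trans (hfle η ⟨h0, h1⟩))

theorem stmt19_general (a : ℕ → ℝ) (ha0 : a 0 = 0) (ha1 : a 1 = 1) (ha : ∀ n, 0 ≤ a n)
    (N : PowerSeries ℝ) (hN : N = expS (PowerSeries.mk a))
    (xf : ℕ → ℝ) (hxf : ∀ n, xf n = (PowerSeries.coeff n N)⁻¹)
    (q : ℕ → ℝ → ℝ)
    (hq : ∀ n η, q n η = xf n * PowerSeries.coeff n (powS N η))
    (b : ℕ → ℕ → ℝ)
    (hb : ∀ m n, b m n = ∫ η in Set.Icc (0 : ℝ) 1, q m η * q n (1 - η)) :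
    ∀ m n : ℕ, xf m * xf n / ((m + n + 1).factorial : ℝ) ≤ b m n := by
  set F := PowerSeries.mk a
  have hF0 : constantCoeff F = 0 := by simp [F, ha0]
  have hF : ∀ i, 0 ≤ coeff i F := fun i => by simp [F, ha]
  have hF1 : coeff 1 F = 1 := by simp [F, ha1]
  have hq' : ∀ n η, q n η = xf n * coeff n (expS (η • F)) := fun n η => by
    rw [hq, hN, powS_expS hF0]
  have hxf_pos : ∀ n, 0 < xf n := fun n => by
    have h := pow_div_factorial_le_coeff_expS_smul hF0 hF hF1 n zero_le_one
    rw [one_smul, one_pow] at h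
    rw [hxf, hN]
    exact inv_pos.2 (lt_of_lt_of_le (by positivity) h)
  have hq_ge : ∀ n, ∀ η ∈ Set.Icc (0 : ℝ) 1, xf n * (η ^ n / n !) ≤ q n η := by
    intro n η hη
    rw [hq' n η]
    exact mul_le_mul_of_nonneg_left (pow_div_factorial_le_coeff_expS_smul hF0 hF hF1 n hη.1)
      (hxf_pos n).le
  have hq_cont : ∀ n, Continuous (q n) := fun n => by
    rw [funext (hq' n)]
    exact continuous_const.mul (continuous_coeff_expS_smul F n)
  intro m n
  rw [hb]
  exact mul_div_factorial_le_integral_mul_comp_one_sub (hq_cont m) (hq_cont n) (hxf_pos m).le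
    (hxf_pos n).le (hq_ge m) (hq_ge n)

theorem stmt19 (a : ℕ → ℝ) (ha0 : a 0 = 0) (ha1 : a 1 = 1) (ha : ∀ n, 0 ≤ a n)
    (hsum : Summable a)
    (N : PowerSeries ℝ) (hN : N = expS (PowerSeries.mk a))
    (xf : ℕ → ℝ) (hxf : ∀ n, xf n = (PowerSeries.coeff n N)⁻¹)
    (q : ℕ → ℝ → ℝ)
    (hq : ∀ n η, q n η = xf n * PowerSeries.coeff n (powS N η))
    (b : ℕ → ℕ → ℝ)
    (hb : ∀ m n, b m n = ∫ η in Set.Icc (0 : ℝ) 1, q m η * q n (1 - η)) :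
    ∀ m n : ℕ, xf m * xf n / ((m + n + 1).factorial : ℝ) ≤ b m n :=
  stmt19_general a ha0 ha1 ha N hN xf hxf q hq b hb
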